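/- arXiv:1512.02443 — 2 statements merged into one kernel-verified Lean document; each statement's English description precedes it below -/
import Mathlib

section
/- Let G be a 2-connected simple graph such that for every edge e of G, the graph G − e (G with the edge e deleted) is not bipartite. Then every edge of G is contained in a cycle of even length. -/
/-!
Write `e = xy` and `H = G - e`. An odd `y`–`x` path in `H` closes up with `e` to an even cycle
through `e`, so it suffices to find one. Since `H` is not bipartite it contains an odd cycle `C`.
Using that `G - w` is connected for every `w`, a `y`–`x` path in `H` through `w` can be rerouted
through any neighbour `v` of `w` while still passing through `w` (go from `v` to the path avoiding
`w` and splice this detour in), so some `y`–`x` path `R` in `H` passes through two adjacent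
vertices of `C`. The first and the last vertex of `C` on `R` are distinct and cut `C` into two
arcs of opposite parity; joining the two ends of `R` by the right arc gives an odd path.
-/

open SimpleGraph

def TwoConnected {V : Type*} [Fintype V] (G : SimpleGraph V) : Prop :=
  2 < Fintype.card V ∧ G.Connected ∧ ∀ v : V, (G.induce {x | x ≠ v}).Connected

namespace SimpleGraph

variable {V : Type*} {G : SimpleGraph V}

namespace Walk

variable {u v w : V}

lemma IsPath.append {p : G.Walk u v} {q : G.Walk v w} (hp : p.IsPath) (hq : q.IsPath)
    (h : ∀ r ∈ p.support, r ∈ q.support → r = v) : (p.append q).IsPath := by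
  rw [isPath_def, support_append]
  refine hp.support_nodup.append hq.support_nodup.tail fun r hrp hrq => ?_
  have hv : v ∉ q.support.tail := by
    have := hq.support_nodup
    rw [← cons_tail_support] at this
    exact (List.nodup_cons.mp this).1
  exact hv (h r hrp (List.mem_of_mem_tail hrq) ▸ hrq)

lemma IsPath.eq_of_mem_support_append {p : G.Walk u v} {q : G.Walk v w}
    (h : (p.append q).IsPath) {r : V} (hp : r ∈ p.support) (hq : r ∈ q.support) : r = v :=
  by_contra fun hrv => h.ne_of_mem_support_of_append hrv hp hq rfl

lemma exists_append_first_mem (p : G.Walk u v) {S : Set V} (h : ∃ r ∈ p.support, r ∈ S) :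
    ∃ (z : V) (p₁ : G.Walk u z) (p₂ : G.Walk z v),
      p₁.append p₂ = p ∧ z ∈ S ∧ ∀ r ∈ p₁.support, r ∈ S → r = z := by
  induction p with
  | nil =>
    obtain ⟨r, hr, hrS⟩ := h
    rw [support_nil, List.mem_singleton] at hr
    exact ⟨_, nil, nil, rfl, hr ▸ hrS, by simp⟩
  | @cons u' v' w' hadj p ih =>
    by_cases hu : u' ∈ S
    · exact ⟨u', nil, cons hadj p, rfl, hu, by simp⟩
    obtain ⟨r, hr, hrS⟩ := h
    have hr' : r ∈ p.support := by
      rw [support_cons, List.mem_cons] at hr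
      exact hr.resolve_left fun h => hu (h ▸ hrS)
    obtain ⟨z, p₁, p₂, rfl, hz, hfirst⟩ := ih ⟨r, hr', hrS⟩
    refine ⟨z, cons hadj p₁, p₂, rfl, hz, fun r hr hrS => ?_⟩
    rw [support_cons, List.mem_cons] at hr
    exact hr.elim (fun h => absurd (h ▸ hrS) hu) (hfirst r · hrS)

/-- Prepending `u` to a path `q` that already visits `u` closes the cycle `u q[..u]`: either it is
odd, or dropping it keeps the parity. -/
theorem exists_isPath_even_iff_or_odd_cycle (p : G.Walk u v) :
    (∃ q : G.Walk u v, q.IsPath ∧ (Even q.length ↔ Even p.length)) ∨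
      ∃ (w : V) (c : G.Walk w w), c.IsCycle ∧ Odd c.length := by
  classical
  induction p with
  | nil => exact .inl ⟨nil, .nil, Iff.rfl⟩
  | @cons u v' v h p ih =>
    obtain ⟨q, hq, hpar⟩ | hcyc := ih
    · by_cases hu : u ∈ q.support
      · have hlen := congrArg length (q.take_spec hu)
        rw [length_append] at hlen
        rcases Nat.even_or_odd (q.takeUntil u hu).length with heven | hodd
        · refine .inr ⟨u, cons h (q.takeUntil u hu), ?_, by simpa [Nat.odd_add_one] using heven⟩
          refine (cons_isCycle_iff _ h).mpr ⟨hq.takeUntil hu, fun he => ?_⟩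
          have := (hq.takeUntil hu).length_eq_one_of_mem_edges (Sym2.eq_swap ▸ he)
          exact Nat.not_even_one (this ▸ heven)
        · refine .inl ⟨q.dropUntil u hu, hq.dropUntil hu, ?_⟩
          rw [length_cons, Nat.even_add_one, ← hpar, ← hlen, Nat.even_add]
          simp only [← Nat.not_odd_iff_even, hodd]
          tauto
      · exact .inl ⟨cons h q, hq.cons hu, by simp [Nat.even_add_one, hpar]⟩
    · exact .inr hcyc

lemma IsCycle.exists_isPath_odd_add {c : G.Walk u u} (hc : c.IsCycle) (hodd : Odd c.length)
    {a b : V} (ha : a ∈ c.support) (hb : b ∈ c.support) (hab : a ≠ b) (k : ℕ) :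
    ∃ p : G.Walk a b, p.IsPath ∧ Odd (p.length + k) ∧ ∀ r ∈ p.support, r ∈ c.support := by
  classical
  set c' := c.rotate a ha
  have hc' : c'.IsCycle := hc.rotate ha
  have hb' : b ∈ c'.support := (mem_support_rotate_iff ..).mpr hb
  have hsplit := c'.take_spec hb'
  have hlen := congrArg length hsplit
  rw [length_append, length_rotate] at hlen
  have hsub : ∀ r ∈ c'.support, r ∈ c.support := fun r => (mem_support_rotate_iff ..).mp
  rcases Nat.even_or_odd ((c'.takeUntil b hb').length + k) with heven | hodd'
  · refine ⟨(c'.dropUntil b hb').reverse, ?_, ?_, ?_⟩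
    · have : ((c'.takeUntil b hb').append (c'.dropUntil b hb')).IsCycle := by rwa [hsplit]
      exact (this.isPath_of_append_right (not_nil_of_ne hab)).reverse
    · rw [length_reverse]
      rw [← hlen] at hodd
      grind
    · simpa using fun r hr => hsub r (c'.support_dropUntil_subset_support hb' hr)
  · exact ⟨c'.takeUntil b hb', hc'.isPath_takeUntil hb', hodd',
      fun r hr => hsub r (c'.support_takeUntil_subset_support hb' hr)⟩

lemma IsPath.exists_disjoint_paths_to_set {p : G.Walk u v} (hp : p.IsPath) {S : Set V} {a b : V}
    (ha : a ∈ p.support) (hb : b ∈ p.support) (haS : a ∈ S) (hbS : b ∈ S) (hab : a ≠ b) :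
    ∃ (a' b' : V) (p₁ : G.Walk u a') (p₂ : G.Walk b' v), p₁.IsPath ∧ p₂.IsPath ∧ a' ≠ b' ∧
      a' ∈ S ∧ b' ∈ S ∧ (∀ r ∈ p₁.support, r ∈ S → r = a') ∧
      (∀ r ∈ p₂.support, r ∈ S → r = b') ∧ ∀ r ∈ p₁.support, r ∉ p₂.support := by
  obtain ⟨a', p₁, q, rfl, ha'S, h₁⟩ := p.exists_append_first_mem ⟨a, ha, haS⟩
  obtain ⟨t, htq, htS, hta'⟩ : ∃ t ∈ q.support, t ∈ S ∧ t ≠ a' := by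
    obtain ⟨t, ht, htS, hta'⟩ : ∃ t ∈ (p₁.append q).support, t ∈ S ∧ t ≠ a' := by
      by_cases h : a = a'
      exacts [⟨b, hb, hbS, h ▸ hab.symm⟩, ⟨a, ha, haS, h⟩]
    rw [mem_support_append_iff] at ht
    exact ⟨t, ht.resolve_left fun h => hta' (h₁ t h htS), htS, hta'⟩
  obtain ⟨b', p₂, m, hq, ⟨hb'S, hb'a'⟩, h₂⟩ := q.reverse.exists_append_first_mem
    (S := {r | r ∈ S ∧ r ≠ a'}) ⟨t, by simpa using htq, htS, hta'⟩
  have hp₂m : (p₂.append m).IsPath := hq ▸ hp.of_append_right.reverse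
  have ha'p₂ : a' ∉ p₂.support := fun h =>
    hb'a' (hp₂m.eq_of_mem_support_append h m.end_mem_support).symm
  refine ⟨a', b', p₁, p₂.reverse, hp.of_append_left, hp₂m.of_append_left.reverse, hb'a'.symm,
    ha'S, hb'S, h₁, fun r hr hrS => ?_, fun r hr₁ hr₂ => ?_⟩
  · rw [support_reverse, List.mem_reverse] at hr
    exact h₂ r hr ⟨hrS, fun h => ha'p₂ (h ▸ hr)⟩
  · rw [support_reverse, List.mem_reverse] at hr₂
    have hrq := (mem_support_append_iff p₂ m).mpr (.inl hr₂)
    rw [hq, support_reverse, List.mem_reverse] at hrq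
    exact ha'p₂ (hp.eq_of_mem_support_append hr₁ hrq ▸ hr₂)

lemma IsCycle.exists_odd_path {c : G.Walk w w} (hc : c.IsCycle) (hodd : Odd c.length)
    {p : G.Walk u v} (hp : p.IsPath) {a b : V} (ha : a ∈ p.support) (hb : b ∈ p.support)
    (haC : a ∈ c.support) (hbC : b ∈ c.support) (hab : a ≠ b) :
    ∃ q : G.Walk u v, q.IsPath ∧ Odd q.length := by
  obtain ⟨a', b', p₁, p₂, hp₁, hp₂, hab', ha'C, hb'C, h₁, h₂, hdisj⟩ :=
    hp.exists_disjoint_paths_to_set (S := {r | r ∈ c.support}) ha hb haC hbC hab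
  obtain ⟨A, hA, hAodd, hAc⟩ := hc.exists_isPath_odd_add hodd ha'C hb'C hab' (p₁.length + p₂.length)
  refine ⟨p₁.append (A.append p₂),
    hp₁.append (hA.append hp₂ fun r hrA hr₂ => h₂ r hr₂ (hAc r hrA)) fun r hr₁ hr => ?_, ?_⟩
  · rw [mem_support_append_iff] at hr
    exact hr.elim (fun hrA => h₁ r hr₁ (hAc r hrA)) (absurd · (hdisj r hr₁))
  · rw [length_append, length_append, ← add_assoc, add_right_comm]
    rwa [add_comm] at hAodd

lemma IsPath.append_cons_append_dropUntil [DecidableEq V] {x y z : V} {p₁ : G.Walk y w}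
    {p₂ : G.Walk w x} (hp : (p₁.append p₂).IsPath) (hwv : G.Adj w v) {T : G.Walk v z}
    (hT : T.IsPath) (hz : z ∈ p₂.support) (hzw : z ≠ w)
    (hTp : ∀ r ∈ T.support, r ∈ (p₁.append p₂).support → r = z) :
    (p₁.append (cons hwv (T.append (p₂.dropUntil z hz)))).IsPath := by
  have hp₂ : p₂.IsPath := hp.of_append_right
  have hd : ∀ r ∈ (p₂.dropUntil z hz).support, r ∈ p₂.support :=
    fun r => (p₂.support_dropUntil_subset_support hz ·)
  have hmid : (T.append (p₂.dropUntil z hz)).IsPath :=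
    hT.append (hp₂.dropUntil hz) fun r hrT hr =>
      hTp r hrT ((mem_support_append_iff ..).mpr (.inr (hd r hr)))
  have hw : w ∉ (T.append (p₂.dropUntil z hz)).support := by
    rw [mem_support_append_iff]
    rintro (hwT | hwd)
    · exact hzw (hTp w hwT ((mem_support_append_iff ..).mpr (.inl p₁.end_mem_support))).symm
    · have hsplit : ((p₂.takeUntil z hz).append (p₂.dropUntil z hz)).IsPath := by
        rwa [take_spec]
      exact hzw (hsplit.eq_of_mem_support_append (start_mem_support _) hwd).symm
  refine hp.of_append_left.append (hmid.cons hw) fun r hr₁ hr => ?_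
  rw [support_cons, List.mem_cons, mem_support_append_iff] at hr
  rcases hr with rfl | hrT | hrd
  · rfl
  · have hrz := hTp r hrT ((mem_support_append_iff ..).mpr (.inl hr₁))
    subst hrz
    exact absurd (hp.eq_of_mem_support_append hr₁ hz) hzw
  · exact hp.eq_of_mem_support_append hr₁ (hd r hrd)

lemma IsPath.exists_isPath_mem_support_of_detour {x y z : V} {p : G.Walk y x} (hp : p.IsPath)
    (hw : w ∈ p.support) (hwv : G.Adj w v) {T : G.Walk v z} (hT : T.IsPath)
    (hz : z ∈ p.support) (hzw : z ≠ w) (hTp : ∀ r ∈ T.support, r ∈ p.support → r = z) :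
    ∃ q : G.Walk y x, q.IsPath ∧ v ∈ q.support ∧ w ∈ q.support := by
  classical
  rw [← p.take_spec hw] at hp hz hTp
  rcases (mem_support_append_iff ..).mp hz with hz₁ | hz₂
  · have hrev : ((p.dropUntil w hw).reverse.append (p.takeUntil w hw).reverse).IsPath := by
      simpa [← reverse_append] using hp.reverse
    have hz' : z ∈ (p.takeUntil w hw).reverse.support := by simpa using hz₁
    have hq := hrev.append_cons_append_dropUntil hwv hT hz' hzw fun r hrT hr =>
      hTp r hrT (by
        simp only [mem_support_append_iff, support_reverse, List.mem_reverse] at hr ⊢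
        exact hr.symm)
    exact ⟨_, hq.reverse, by simp, by simp⟩
  · exact ⟨_, hp.append_cons_append_dropUntil hwv hT hz₂ hzw hTp, by simp, by simp⟩

end Walk

lemma exists_odd_cycle_of_not_colorable_two (h : ¬ G.Colorable 2) :
    ∃ (u : V) (c : G.Walk u u), c.IsCycle ∧ Odd c.length := by
  obtain ⟨u, w, hw⟩ : ∃ u, ∃ w : G.Walk u u, Odd w.length := by
    simpa [two_colorable_iff_forall_loop_even] using h
  refine w.exists_isPath_even_iff_or_odd_cycle.resolve_left ?_
  rintro ⟨q, hq, hpar⟩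
  rw [(Walk.isPath_iff_nil.mp hq).length_eq_zero] at hpar
  exact Nat.not_even_iff_odd.mpr hw (hpar.mp Even.zero)

lemma exists_even_cycle_of_odd_path {x y : V} (hxy : G.Adj x y)
    {p : (G.deleteEdges {s(x, y)}).Walk y x} (hp : p.IsPath) (hodd : Odd p.length) :
    ∃ D : G.Walk x x, D.IsCycle ∧ Even D.length ∧ s(x, y) ∈ D.edges := by
  refine ⟨.cons hxy (p.mapLe (G.deleteEdges_le _)),
    (Walk.cons_isCycle_iff _ _).mpr ⟨hp.mapLe _, fun he => ?_⟩,
    by simpa [Nat.even_add_one] using hodd, by simp⟩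
  rw [Walk.edges_mapLe_eq_edges] at he
  simpa using p.edges_subset_edgeSet he

lemma exists_isPath_notMem_support {w a b : V} (h : (G.induce {r | r ≠ w}).Connected)
    (ha : a ≠ w) (hb : b ≠ w) : ∃ p : G.Walk a b, p.IsPath ∧ w ∉ p.support := by
  classical
  obtain ⟨q⟩ := h.preconnected ⟨a, ha⟩ ⟨b, hb⟩
  set q' := q.map (Embedding.induce {r | r ≠ w}).toHom
  refine ⟨q'.bypass, q'.bypass_isPath, fun hw => ?_⟩
  obtain ⟨r, -, hr⟩ := List.mem_map.mp (Walk.support_map .. ▸ q'.support_bypass_subset_support hw)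
  exact r.2 hr

section

variable (hsep : ∀ v, (G.induce {r | r ≠ v}).Connected) {x y : V} (hxy : x ≠ y)
include hsep hxy

lemma reachable_deleteEdges_of_two_lt_card [Fintype V] (hcard : 2 < Fintype.card V) :
    (G.deleteEdges {s(x, y)}).Reachable y x := by
  classical
  obtain ⟨z, -, hz⟩ := Finset.exists_mem_notMem_of_card_lt_card (s := {x, y})
    (t := Finset.univ) (Finset.card_le_two.trans_lt (Finset.card_univ (α := V) ▸ hcard))
  obtain ⟨hzx, hzy⟩ : z ≠ x ∧ z ≠ y := by simpa using hz
  obtain ⟨p, -, hxp⟩ := exists_isPath_notMem_support (hsep x) hxy.symm hzx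
  obtain ⟨q, -, hyq⟩ := exists_isPath_notMem_support (hsep y) hzy hxy
  refine ⟨(p.append q).toDeleteEdge s(x, y) fun he => ?_⟩
  rw [Walk.edges_append, List.mem_append] at he
  exact he.elim (fun h => hxp (p.fst_mem_support_of_mem_edges h))
    (fun h => hyq (q.snd_mem_support_of_mem_edges h))

lemma exists_isPath_deleteEdges_of_adj {p : (G.deleteEdges {s(x, y)}).Walk y x}
    (hp : p.IsPath) {v w : V} (hw : w ∈ p.support) (hv : v ∉ p.support) (hvw : G.Adj v w) :
    ∃ q : (G.deleteEdges {s(x, y)}).Walk y x, q.IsPath ∧ v ∈ q.support ∧ w ∈ q.support := by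
  obtain ⟨t, htp, htw⟩ : ∃ t ∈ p.support, t ≠ w := by
    by_cases h : x = w
    exacts [⟨y, p.start_mem_support, h ▸ hxy.symm⟩, ⟨x, p.end_mem_support, h⟩]
  obtain ⟨W, hW, hwW⟩ := exists_isPath_notMem_support (hsep w) hvw.ne htw
  obtain ⟨z, T, T', hTT', hzp, hTp⟩ :=
    W.exists_append_first_mem (S := {r | r ∈ p.support}) ⟨t, W.end_mem_support, htp⟩
  have hT : T.IsPath := (hTT' ▸ hW).of_append_left
  have hwT : w ∉ T.support := fun h => hwW (hTT' ▸ (Walk.mem_support_append_iff ..).mpr (.inl h))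
  -- `T` meets `p` only in `z`, while both ends of `xy` lie on `p`.
  have hxyT : s(x, y) ∉ T.edges := fun he => hxy <|
    (hTp x (T.fst_mem_support_of_mem_edges he) p.end_mem_support).trans
      (hTp y (T.snd_mem_support_of_mem_edges he) p.start_mem_support).symm
  have hwv : (G.deleteEdges {s(x, y)}).Adj w v := by
    refine deleteEdges_adj.mpr ⟨hvw.symm, fun h => ?_⟩
    rw [Set.mem_singleton_iff, Sym2.eq_iff] at h
    rcases h with ⟨-, rfl⟩ | ⟨-, rfl⟩
    exacts [hv p.start_mem_support, hv p.end_mem_support]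
  have hT' : (T.toDeleteEdge s(x, y) hxyT).IsPath := hT.toDeleteEdges G _ _
  exact hp.exists_isPath_mem_support_of_detour hw hwv hT' hzp
    (fun h => hwT (h ▸ T.end_mem_support)) fun r hr => hTp r (by simpa using hr)

lemma exists_isPath_deleteEdges_mem_support [Fintype V] (hcard : 2 < Fintype.card V)
    (hconn : G.Connected) (v : V) :
    ∃ p : (G.deleteEdges {s(x, y)}).Walk y x, p.IsPath ∧ v ∈ p.support := by
  obtain ⟨W⟩ := hconn.preconnected v y
  induction W with
  | nil =>
    obtain ⟨p, hp⟩ := (reachable_deleteEdges_of_two_lt_card hsep hxy hcard).exists_isPath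
    exact ⟨p, hp, p.start_mem_support⟩
  | @cons a b _ hadj W ih =>
    obtain ⟨p, hp, hp'⟩ := ih hxy
    by_cases hv : a ∈ p.support
    · exact ⟨p, hp, hv⟩
    · obtain ⟨q, hq, hvq, -⟩ := exists_isPath_deleteEdges_of_adj hsep hxy hp hp' hv hadj
      exact ⟨q, hq, hvq⟩

lemma exists_isPath_deleteEdges_mem_support_of_adj [Fintype V] (hcard : 2 < Fintype.card V)
    (hconn : G.Connected) {u w : V} (huw : G.Adj u w) :
    ∃ p : (G.deleteEdges {s(x, y)}).Walk y x, p.IsPath ∧ u ∈ p.support ∧ w ∈ p.support := by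
  obtain ⟨p, hp, hw⟩ := exists_isPath_deleteEdges_mem_support hsep hxy hcard hconn w
  by_cases hu : u ∈ p.support
  · exact ⟨p, hp, hu, hw⟩
  · exact exists_isPath_deleteEdges_of_adj hsep hxy hp hw hu huw

end

end SimpleGraph

/-- If `G` is 2-connected and deleting any edge leaves a non-bipartite graph,
then every edge of `G` is contained in an even cycle. -/
theorem stmt_1 {V : Type*} [Fintype V] (G : SimpleGraph V) (hG : TwoConnected G)
    (hbip : ∀ e ∈ G.edgeSet, ¬ (G.deleteEdges {e}).Colorable 2) :
    ∀ e ∈ G.edgeSet, ∃ (b : V) (D : G.Walk b b),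
      D.IsCycle ∧ Even D.length ∧ e ∈ D.edges := by
  obtain ⟨hcard, hconn, hsep⟩ := hG
  rintro ⟨x, y⟩ he
  obtain ⟨c, C, hC, hCodd⟩ := exists_odd_cycle_of_not_colorable_two (hbip _ he)
  have hcd := Walk.adj_snd hC.not_nil
  obtain ⟨R, hR, hcR, hdR⟩ := exists_isPath_deleteEdges_mem_support_of_adj hsep
    (G.ne_of_adj he) hcard hconn ((deleteEdges_adj.mp hcd).1)
  obtain ⟨p, hp, hpodd⟩ :=
    hC.exists_odd_path hCodd hR hcR hdR C.start_mem_support (C.getVert_mem_support 1) hcd.ne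
  obtain ⟨D, hD, hDeven, hxyD⟩ := exists_even_cycle_of_odd_path he hp hpodd
  exact ⟨x, D, hD, hDeven, hxyD⟩
end

section
/- Let G be a 2-edge-connected k-regular simple graph with k ≥ 3. Then every edge of G is contained in a circuit of even length. -/
/-!
Write `e = uv` and `H = G - e`; an even circuit through `e` is `e` followed by an odd `v`–`u`
trail of `H`.

If `H` is bipartite, give its two classes the signs `±1`. Every dart of `H` joins opposite signs,
so the signed degree sum of `G` is carried by the two darts of `e` alone; `k`-regularity turns it
into `k · (signed vertex count)`. Were `u` and `v` on the same side this would read `k ∣ 2`,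
so they are not, and every `v`–`u` path of `H` is odd.

Otherwise `H` has an odd cycle `C`. Since `G` has no bridge, the vertices lying on some
`v`–`u` trail of `H` are closed under adjacency (reroute the trail through an ear), so some such
trail meets `C`. Replacing its part between its first and last vertex on `C` by either arc of `C`
gives two trails whose lengths differ by an odd number.
-/

open SimpleGraph

def TwoEdgeConnected {V : Type*} (G : SimpleGraph V) : Prop :=
  G.Connected ∧ ∀ e ∈ G.edgeSet, (G.deleteEdges {e}).Connected

namespace SimpleGraph.Walk

variable {V : Type*} {G : SimpleGraph V} {a b c u v x y z : V}

lemma exists_eq_append_of_exists_mem_support (S : Set V) (w : G.Walk a b)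
    (h : ∃ x ∈ w.support, x ∈ S) :
    ∃ x ∈ S, ∃ (p : G.Walk a x) (q : G.Walk x b), w = p.append q ∧
      ∀ y ∈ p.support, y ∈ S → y = x := by
  induction w with
  | nil =>
    obtain ⟨x, hx, hxS⟩ := h
    rw [support_nil, List.mem_singleton] at hx
    subst hx
    exact ⟨_, hxS, nil, nil, rfl, by simp⟩
  | @cons a a' b hadj w ih =>
    by_cases ha : a ∈ S
    · exact ⟨a, ha, nil, cons hadj w, rfl, by simp⟩
    · obtain ⟨x, hxS, p, q, rfl, hp⟩ := ih (by simpa [ha] using h)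
      refine ⟨x, hxS, cons hadj p, q, rfl, ?_⟩
      simp only [support_cons, List.mem_cons, forall_eq_or_imp]
      exact ⟨fun h => absurd h ha, hp⟩

lemma notMem_edges_of_forall_mem_support {S : Set V} {p : G.Walk a x}
    (hp : ∀ y ∈ p.support, y ∈ S → y = x) (hy : y ∈ S) (hz : z ∈ S) : s(y, z) ∉ p.edges := by
  intro he
  have hyx := hp y (p.fst_mem_support_of_mem_edges he) hy
  have hzx := hp z (p.snd_mem_support_of_mem_edges he) hz
  exact (p.adj_of_mem_edges he).ne (hyx.trans hzx.symm)

lemma disjoint_edges_of_forall_mem_support {p : G.Walk a x} {q : G.Walk b c}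
    (hp : ∀ y ∈ p.support, y ∈ q.support → y = x) : p.edges.Disjoint q.edges := by
  intro e hep heq
  induction e using Sym2.ind with
  | _ y z =>
    exact notMem_edges_of_forall_mem_support (S := {y | y ∈ q.support}) hp
      (q.fst_mem_support_of_mem_edges heq) (q.snd_mem_support_of_mem_edges heq) hep

lemma exists_isTrail_of_isTrail_deleteEdges {s : Set (Sym2 V)} {p : (G.deleteEdges s).Walk a b}
    (hp : p.IsTrail) :
    ∃ q : G.Walk a b, q.IsTrail ∧ q.length = p.length ∧ ∀ e ∈ q.edges, e ∉ s := by
  refine ⟨p.mapLe (G.deleteEdges_le s), hp.mapLe _, length_map .., fun e he => ?_⟩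
  simp only [mapLe, edges_map, List.mem_map, Hom.ofLE_apply, Sym2.map_id', id] at he
  obtain ⟨e, he', rfl⟩ := he
  exact (edgeSet_deleteEdges s ▸ p.edges_subset_edgeSet he').2

lemma exists_isTrail_of_reachable_deleteEdges {s : Set (Sym2 V)}
    (h : (G.deleteEdges s).Reachable a b) : ∃ q : G.Walk a b, q.IsTrail ∧ ∀ e ∈ q.edges, e ∉ s := by
  classical
  obtain ⟨p⟩ := h
  obtain ⟨q, hq, -, hqs⟩ := exists_isTrail_of_isTrail_deleteEdges p.bypass_isPath.isTrail
  exact ⟨q, hq, hqs⟩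

lemma IsTrail.exists_isTrail_support_subset {T : G.Walk a b} (hT : T.IsTrail)
    {Q : G.Walk x y} (hQ : Q.IsTrail) (hx : x ∈ T.support) (hy : y ∈ T.support)
    (hTQ : T.edges.Disjoint Q.edges) :
    ∃ T' : G.Walk a b, T'.IsTrail ∧ Q.support ⊆ T'.support ∧ T'.edges ⊆ T.edges ++ Q.edges := by
  classical
  induction T with
  | nil =>
    rw [support_nil, List.mem_singleton] at hx hy
    subst hx hy
    exact ⟨Q, hQ, List.Subset.refl _, by simp⟩
  | @cons a a' b h T ih =>
    by_cases hax : a = x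
    · subst hax
      have hD := (cons h T).edges_dropUntil_subset_edges hy
      refine ⟨Q.append ((cons h T).dropUntil y hy), ?_, by simp, ?_⟩
      · rw [isTrail_append]
        exact ⟨hQ, hT.dropUntil hy, fun e he he' => hTQ (hD he') he⟩
      · rw [edges_append]
        exact List.append_subset.2 ⟨List.subset_append_right _ _,
          List.Subset.trans hD (List.subset_append_left _ _)⟩
    by_cases hay : a = y
    · subst hay
      have hD := (cons h T).edges_dropUntil_subset_edges hx
      refine ⟨Q.reverse.append ((cons h T).dropUntil x hx), ?_,
        fun w hw => by simp [support_append, hw], ?_⟩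
      · rw [isTrail_append]
        exact ⟨hQ.reverse, hT.dropUntil hx, fun e he he' => hTQ (hD he') (by simpa using he)⟩
      · rw [edges_append, edges_reverse]
        exact List.append_subset.2 ⟨List.reverse_subset.2 (List.subset_append_right _ _),
          List.Subset.trans hD (List.subset_append_left _ _)⟩
    rw [isTrail_cons] at hT
    rw [support_cons, List.mem_cons] at hx hy
    obtain ⟨T', hT', hQT', hE⟩ := ih hT.1 (hx.resolve_left (Ne.symm hax))
      (hy.resolve_left (Ne.symm hay)) (fun e he he' => hTQ (by simp [he]) he')
    refine ⟨cons h T', (isTrail_cons _ _).2 ⟨hT', fun he => ?_⟩, fun w hw => by simp [hQT' hw], ?_⟩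
    · rcases List.mem_append.1 (hE he) with he | he
      · exact hT.2 he
      · exact hTQ (by simp) he
    · intro e he
      simp only [edges_cons, List.mem_cons, List.cons_append] at he ⊢
      rcases he with he | he
      · exact Or.inl he
      · exact Or.inr (hE he)

lemma IsTrail.exists_odd_isTrail_of_odd_isTrail {P : G.Walk a b} (hP : P.IsTrail)
    {C : G.Walk z z} (hC : C.IsTrail) (hCodd : Odd C.length)
    (hPC : ∃ x ∈ P.support, x ∈ C.support) :
    ∃ P' : G.Walk a b, P'.IsTrail ∧ Odd P'.length ∧ P'.edges ⊆ P.edges ++ C.edges := by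
  classical
  obtain ⟨x, hx, A, M, rfl, hA⟩ :=
    exists_eq_append_of_exists_mem_support {w | w ∈ C.support} P hPC
  obtain ⟨y, hy, B, N, hMBN, hB⟩ :=
    exists_eq_append_of_exists_mem_support {w | w ∈ C.support} M.reverse ⟨x, by simp, hx⟩
  obtain rfl : M = N.reverse.append B.reverse := by
    rw [← reverse_append, ← hMBN, reverse_reverse]
  obtain ⟨R, hR, hRC, hodd⟩ : ∃ R : G.Walk x y, R.IsTrail ∧ R.edges ⊆ C.edges ∧
      Odd (A.length + R.length + B.length) := by
    set C' := C.rotate x hx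
    have hy' : y ∈ C'.support := by simpa [C'] using hy
    have hC' : C'.IsTrail := hC.rotate hx
    have hC'C : C'.edges ⊆ C.edges := fun e he => (rotate_edges C x hx).mem_iff.1 he
    have hlen : (C'.takeUntil y hy').length + (C'.dropUntil y hy').length = C.length := by
      rw [← length_append, take_spec, length_rotate]
    rcases Nat.even_or_odd (A.length + (C'.takeUntil y hy').length + B.length) with h | h
    · refine ⟨(C'.dropUntil y hy').reverse, (hC'.dropUntil hy').reverse, ?_, ?_⟩
      · rw [edges_reverse]
        exact List.Subset.trans (List.reverse_subset.2 (edges_dropUntil_subset_edges _ _)) hC'C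
      · rw [length_reverse]
        rw [Nat.odd_iff] at hCodd ⊢
        rw [Nat.even_iff] at h
        omega
    · exact ⟨_, hC'.takeUntil hy', List.Subset.trans (edges_takeUntil_subset_edges _ _) hC'C, h⟩
  have hAR : A.edges.Disjoint R.edges := fun e he he' =>
    disjoint_edges_of_forall_mem_support hA he (hRC he')
  have hRB : R.edges.Disjoint B.edges := fun e he' he =>
    disjoint_edges_of_forall_mem_support hB he (hRC he')
  refine ⟨A.append (R.append B.reverse), ?_, ?_, ?_⟩
  · simp_all [isTrail_append]
  · simpa [length_append, add_assoc] using hodd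
  · intro e he
    simp only [edges_append, edges_reverse, List.mem_append, List.mem_reverse] at he ⊢
    have := @hRC e
    tauto

lemma exists_isTrail_mem_support_of_not_isBridge
    (hbr : ∀ x y, G.Adj x y → ¬G.IsBridge s(x, y)) (huv : G.Adj u v) (hz : G.Reachable z v) :
    ∃ T : G.Walk v u, T.IsTrail ∧ s(u, v) ∉ T.edges ∧ z ∈ T.support := by
  classical
  obtain ⟨p⟩ := hz
  induction p with
  | @nil v =>
    obtain ⟨T, hT, huvT⟩ := exists_isTrail_of_reachable_deleteEdges (not_not.1 (hbr u v huv)).symm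
    exact ⟨T, hT, fun h => huvT _ h rfl, T.start_mem_support⟩
  | @cons z c v hzc p ih =>
    obtain ⟨T, hT, huvT, hcT⟩ := ih huv
    by_cases hzT : z ∈ T.support
    · exact ⟨T, hT, huvT, hzT⟩
    obtain ⟨P, hP, hzcP⟩ := exists_isTrail_of_reachable_deleteEdges (not_not.1 (hbr z c hzc))
    -- `c → z → E` is an ear of `T` through `z`; it avoids `uv` because `u` and `v` lie on `T`.
    obtain ⟨x, hx, E, _, rfl, hE⟩ :=
      exists_eq_append_of_exists_mem_support {w | w ∈ T.support} P ⟨c, by simp, hcT⟩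
    have hQ : (cons hzc.symm E).IsTrail :=
      (isTrail_cons _ _).2 ⟨hP.of_append_left, fun h =>
        hzcP s(z, c) (edges_append .. ▸ List.mem_append_left _ (Sym2.eq_swap ▸ h)) rfl⟩
    have hzcT : s(c, z) ∉ T.edges := fun h => hzT (T.snd_mem_support_of_mem_edges h)
    have hTQ : T.edges.Disjoint (cons hzc.symm E).edges := by
      rw [edges_cons, List.disjoint_cons_right]
      exact ⟨hzcT, (disjoint_edges_of_forall_mem_support hE).symm⟩
    obtain ⟨T', hT', hQT', hT'E⟩ := hT.exists_isTrail_support_subset hQ hcT hx hTQ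
    refine ⟨T', hT', fun h => ?_, hQT' (by simp)⟩
    have hu : u ∈ T.support := T.end_mem_support
    have hv : v ∈ T.support := T.start_mem_support
    rcases List.mem_append.1 (hT'E h) with h | h
    · exact huvT h
    rw [edges_cons, List.mem_cons] at h
    rcases h with h | h
    · rcases Sym2.eq_iff.1 h with ⟨-, rfl⟩ | ⟨rfl, -⟩ <;> contradiction
    · exact notMem_edges_of_forall_mem_support hE hu hv h

lemma exists_isPath_or_exists_odd_isCycle (w : G.Walk a b) :
    (∃ p : G.Walk a b, p.IsPath ∧ (Even p.length ↔ Even w.length)) ∨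
      ∃ (x : V) (c : G.Walk x x), c.IsCycle ∧ Odd c.length := by
  classical
  induction w with
  | nil => exact Or.inl ⟨nil, .nil, Iff.rfl⟩
  | @cons a a' b h w ih =>
    obtain ⟨p, hp, hpw⟩ | hcyc := ih
    swap
    · exact Or.inr hcyc
    by_cases ha : a ∈ p.support
    · have hlen := congrArg length (p.take_spec ha)
      rw [length_append] at hlen
      by_cases h1 : Even (p.takeUntil a ha).length
      · refine Or.inr ⟨a, cons h (p.takeUntil a ha),
          (cons_isCycle_iff _ _).2 ⟨hp.takeUntil ha, fun he => ?_⟩,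
          by simpa [Nat.odd_add_one] using h1⟩
        have := (hp.takeUntil ha).length_eq_one_of_mem_edges (Sym2.eq_swap ▸ he)
        rw [this] at h1
        exact Nat.not_even_one h1
      · refine Or.inl ⟨p.dropUntil a ha, hp.dropUntil ha, ?_⟩
        rw [length_cons, Nat.even_add_one, ← hpw, ← hlen, Nat.even_add]
        tauto
    · exact Or.inl ⟨cons h p, (cons_isPath_iff _ _).2 ⟨hp, ha⟩, by simp [Nat.even_add_one, hpw]⟩

end SimpleGraph.Walk

namespace SimpleGraph

variable {V : Type*} {G : SimpleGraph V}

lemma exists_odd_isCycle_of_not_colorable_two (h : ¬G.Colorable 2) :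
    ∃ (x : V) (c : G.Walk x x), c.IsCycle ∧ Odd c.length := by
  classical
  obtain ⟨a, w, hw⟩ : ∃ a, ∃ w : G.Walk a a, ¬Even w.length := by
    simpa [two_colorable_iff_forall_loop_even] using h
  refine (w.exists_isPath_or_exists_odd_isCycle).resolve_left ?_
  rintro ⟨p, hp, hpw⟩
  exact hw (hpw.1 (by simp [(Walk.isPath_iff_nil.1 hp).length_eq_zero]))

lemma IsRegularOfDegree.dvd_two_of_coloring_deleteEdges [Fintype V] [DecidableRel G.Adj]
    {k : ℕ} {u v : V} (hreg : G.IsRegularOfDegree k) (huv : G.Adj u v)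
    (c : (G.deleteEdges {s(u, v)}).Coloring Bool) (hc : c u = c v) : k ∣ 2 := by
  classical
  set σ : V → ℤ := fun x => if c x = c u then 1 else -1
  have hfst : ∑ d : G.Dart, σ d.fst = k * ∑ x, σ x := by
    rw [← Finset.sum_fiberwise Finset.univ (fun d : G.Dart => d.fst), Finset.mul_sum]
    refine Finset.sum_congr rfl fun x _ => ?_
    rw [Finset.sum_congr rfl (g := fun _ => σ x) (by simp +contextual), Finset.sum_const]
    rw [← hreg x, ← dart_fst_fiber_card_eq_degree, nsmul_eq_mul]
  have hsnd : ∑ d : G.Dart, σ d.snd = ∑ d : G.Dart, σ d.fst :=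
    Fintype.sum_equiv (Dart.symm_involutive.toPerm _) _ _ (fun d => rfl)
  -- only the two darts of `uv` join vertices of equal sign
  have hpair : ∀ d : G.Dart, σ d.fst + σ d.snd = if d.edge = s(u, v) then 2 else 0 := by
    intro d
    split_ifs with hd
    · rcases Sym2.eq_iff.1 hd with ⟨h1, h2⟩ | ⟨h1, h2⟩ <;> simp [σ, h1, h2, hc]
    · have hne := c.valid ((deleteEdges_adj ..).2 ⟨d.adj, hd⟩)
      simp only [σ]
      revert hne
      cases c d.fst <;> cases c d.snd <;> cases c u <;> decide
  have hsum : ∑ d : G.Dart, (σ d.fst + σ d.snd) = 4 := by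
    simp_rw [hpair]
    rw [Finset.sum_ite, Finset.sum_const_zero, add_zero, Finset.sum_const,
      G.dart_edge_fiber_card _ huv]
    norm_num
  have : (k : ℤ) * ∑ x, σ x = 2 := by
    rw [Finset.sum_add_distrib, hsnd, hfst] at hsum
    linarith
  exact Int.natCast_dvd_natCast.1 ⟨_, this.symm⟩

lemma exists_odd_isTrail_of_colorable [Fintype V] [DecidableRel G.Adj] {k : ℕ} {u v : V}
    (hk : 3 ≤ k) (hreg : G.IsRegularOfDegree k) (huv : G.Adj u v)
    (hH : (G.deleteEdges {s(u, v)}).Colorable 2) (hvu : (G.deleteEdges {s(u, v)}).Reachable v u) :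
    ∃ T : G.Walk v u, T.IsTrail ∧ s(u, v) ∉ T.edges ∧ Odd T.length := by
  classical
  let c := recolorOfEquiv _ finTwoEquiv hH.some
  have hc : c u ≠ c v := fun h => by
    have := Nat.le_of_dvd two_pos (hreg.dvd_two_of_coloring_deleteEdges huv c h)
    omega
  obtain ⟨p⟩ := hvu
  obtain ⟨T, hT, hlen, hTe⟩ := Walk.exists_isTrail_of_isTrail_deleteEdges p.bypass_isPath.isTrail
  refine ⟨T, hT, fun h => hTe _ h rfl, hlen ▸ (c.odd_length_iff_not_congr _).2 ?_⟩
  revert hc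
  cases c u <;> cases c v <;> decide

lemma exists_odd_isTrail_of_not_colorable {u v : V} (hconn : G.Preconnected)
    (hbr : ∀ x y, G.Adj x y → ¬G.IsBridge s(x, y)) (huv : G.Adj u v)
    (hH : ¬(G.deleteEdges {s(u, v)}).Colorable 2) :
    ∃ T : G.Walk v u, T.IsTrail ∧ s(u, v) ∉ T.edges ∧ Odd T.length := by
  obtain ⟨z, C, hC, hCodd⟩ := exists_odd_isCycle_of_not_colorable_two hH
  obtain ⟨C', hC', hlen, hC'e⟩ := Walk.exists_isTrail_of_isTrail_deleteEdges hC.isTrail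
  obtain ⟨T, hT, huvT, hzT⟩ :=
    Walk.exists_isTrail_mem_support_of_not_isBridge hbr huv (hconn z v)
  obtain ⟨P, hP, hodd, hPe⟩ :=
    hT.exists_odd_isTrail_of_odd_isTrail hC' (hlen ▸ hCodd) ⟨z, hzT, C'.start_mem_support⟩
  exact ⟨P, hP, fun h => (List.mem_append.1 (hPe h)).elim huvT (hC'e _ · rfl), hodd⟩

end SimpleGraph

/-- In a 2-edge-connected `k`-regular graph with `k ≥ 3`, every edge is
contained in an even circuit. -/
theorem stmt_10 {V : Type*} [Fintype V] (G : SimpleGraph V) [DecidableRel G.Adj]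
    (hG : TwoEdgeConnected G) (k : ℕ) (hk : 3 ≤ k) (hreg : G.IsRegularOfDegree k) :
    ∀ e ∈ G.edgeSet, ∃ (b : V) (D : G.Walk b b),
      D.IsCircuit ∧ Even D.length ∧ e ∈ D.edges := by
  refine Sym2.ind fun u v (huv : G.Adj u v) => ?_
  have hbr : ∀ x y, G.Adj x y → ¬G.IsBridge s(x, y) := fun x y h =>
    not_not.2 ((hG.2 _ h).preconnected x y)
  obtain ⟨T, hT, huvT, hodd⟩ :
      ∃ T : G.Walk v u, T.IsTrail ∧ s(u, v) ∉ T.edges ∧ Odd T.length := by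
    by_cases hH : (G.deleteEdges {s(u, v)}).Colorable 2
    · exact exists_odd_isTrail_of_colorable hk hreg huv hH ((hG.2 _ huv).preconnected v u)
    · exact exists_odd_isTrail_of_not_colorable hG.1.preconnected hbr huv hH
  exact ⟨u, .cons huv T, ⟨(Walk.isTrail_cons _ _).2 ⟨hT, huvT⟩, by simp⟩,
    by simpa [Nat.even_add_one] using hodd, by simp⟩
end
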